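/- Potential-gradient identity: in a Markov potential game, for every initial distribution μ with Φ(μ,π) = ∑_s μ(s)Φ(s,π), and all i, s, a_i, the partial derivatives satisfy ∂Φ(μ,π)/∂π_i(s,a_i) = ∂V_i(μ,π)/∂π_i(s,a_i) = (1/(1−δ)) d_μ^π(s) Q_i(s,a_i;π). -/

import Mathlib

/-! The transition matrix `P^π` of a policy profile is row-stochastic, so it has `ℓ∞` operator
norm at most `1` and `V_i^π = (1 - δ P^π)⁻¹ r_i^π` is a convergent Neumann series. This stays
true for the profile `π_t` obtained by setting the entry `π_i(s, a_i)` to `t`, as long as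
`‖δ P^{π_t}‖ < 1`, which holds for `t` near `π_i(s, a_i)`. Changing that entry changes the Bellman
operator only in row `s`, by `(t - π_i(s, a_i)) Q_i(s, a_i)`; hence the performance difference
`V_i^{π_t} - V_i^π = (t - π_i(s, a_i)) Q_i(s, a_i) (1 - δ P^{π_t})⁻¹ e_s`, and continuity of
matrix inversion gives the derivative `Q_i(s, a_i) ∑_{s₀} μ(s₀) (1 - δ P^π)⁻¹(s₀, s)`, which is
`d_μ^π(s) Q_i(s, a_i) / (1 - δ)`. Along deviations of player `i` the potential differs from
`V_i` by a constant, so it has the same derivative. -/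

open Finset

namespace MPG

def simplex {α : Type*} [Fintype α] (p : α → ℝ) : Prop :=
  (∀ x, 0 ≤ p x) ∧ ∑ x, p x = 1

variable {S I : Type*} {A : I → Type*}
variable [Fintype S] [DecidableEq S] [Fintype I] [DecidableEq I]
  [∀ i, Fintype (A i)] [∀ i, DecidableEq (A i)]

def IsPolicy (π : ∀ i, S → A i → ℝ) : Prop := ∀ i s, simplex (π i s)

def IsKernel (P : S → (∀ i, A i) → S → ℝ) : Prop := ∀ s a, simplex (P s a)

noncomputable def jointProb (π : ∀ i, S → A i → ℝ) (s : S) (a : ∀ i, A i) : ℝ :=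
  ∏ i, π i s (a i)

noncomputable def stepDist (P : S → (∀ i, A i) → S → ℝ) (π : ∀ i, S → A i → ℝ)
    (ν : S → ℝ) : S → ℝ :=
  fun s' => ∑ s, ν s * ∑ a, jointProb π s a * P s a s'

noncomputable def expReward (f : S → (∀ i, A i) → ℝ) (π : ∀ i, S → A i → ℝ)
    (ν : S → ℝ) : ℝ :=
  ∑ s, ν s * ∑ a, jointProb π s a * f s a

def dirac (s : S) : S → ℝ := fun s' => if s' = s then 1 else 0

/-- Value function: expected total discounted payoff of player `i` starting at `s`. -/
noncomputable def V (u : I → S → (∀ i, A i) → ℝ) (P : S → (∀ i, A i) → S → ℝ)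
    (δ : ℝ) (π : ∀ i, S → A i → ℝ) (i : I) (s : S) : ℝ :=
  ∑' k : ℕ, δ ^ k * expReward (u i) π ((stepDist P π)^[k] (dirac s))

def pureAt {i : I} (ai : A i) : S → A i → ℝ := fun _ b => if b = ai then 1 else 0

/-- The policy profile where player `i` deterministically plays `ai`. -/
noncomputable def devPolicy (π : ∀ i, S → A i → ℝ) (i : I) (ai : A i) :
    ∀ j, S → A j → ℝ :=
  Function.update π i (pureAt ai)

/-- Q-function: one-stage deviation value of player `i`. -/
noncomputable def Q (u : I → S → (∀ i, A i) → ℝ) (P : S → (∀ i, A i) → S → ℝ)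
    (δ : ℝ) (π : ∀ i, S → A i → ℝ) (i : I) (s : S) (ai : A i) : ℝ :=
  ∑ a, jointProb (devPolicy π i ai) s a *
    (u i s a + δ * ∑ s', P s a s' * V u P δ π i s')

noncomputable def Vmu (u : I → S → (∀ i, A i) → ℝ) (P : S → (∀ i, A i) → S → ℝ)
    (δ : ℝ) (π : ∀ i, S → A i → ℝ) (i : I) (μ : S → ℝ) : ℝ :=
  ∑ s, μ s * V u P δ π i s

/-- Discounted state visitation distribution. -/
noncomputable def dvisit (P : S → (∀ i, A i) → S → ℝ) (δ : ℝ)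
    (π : ∀ i, S → A i → ℝ) (μ : S → ℝ) (s : S) : ℝ :=
  (1 - δ) * ∑ s0, μ s0 * ∑' k : ℕ, δ ^ k * ((stepDist P π)^[k] (dirac s0)) s

/-- Stationary Nash equilibrium. -/
def IsNash (u : I → S → (∀ i, A i) → ℝ) (P : S → (∀ i, A i) → S → ℝ)
    (δ : ℝ) (π : ∀ i, S → A i → ℝ) : Prop :=
  IsPolicy π ∧ ∀ (i : I) (πi : S → A i → ℝ), (∀ s, simplex (πi s)) →
    ∀ μ : S → ℝ, simplex μ →
      Vmu u P δ (Function.update π i πi) i μ ≤ Vmu u P δ π i μ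


noncomputable def updateEntry (π : ∀ i, S → A i → ℝ) (i : I) (s : S) (ai : A i)
    (t : ℝ) : ∀ j, S → A j → ℝ :=
  Function.update π i (fun s' b => if s' = s ∧ b = ai then t else π i s' b)


set_option linter.unusedSectionVars false

open Matrix

theorem _root_.hasDerivAt_of_eventually_sub_eq_mul {𝕜 : Type*} [NontriviallyNormedField 𝕜]
    {f g : 𝕜 → 𝕜} {x : 𝕜} (hfg : ∀ᶠ t in nhds x, f t - f x = (t - x) * g t)
    (hg : ContinuousAt g x) : HasDerivAt f (g x) x := by
  rw [hasDerivAt_iff_tendsto_slope]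
  refine (hg.tendsto.mono_left nhdsWithin_le_nhds).congr' ?_
  filter_upwards [nhdsWithin_le_nhds hfg, self_mem_nhdsWithin] with t ht hne
  rw [slope_def_field, ht, mul_div_cancel_left₀ _ (sub_ne_zero.2 hne)]

theorem _root_.Matrix.inverse_mulVec_sub {n R : Type*} [Fintype n] [DecidableEq n] [CommRing R]
    {M : Matrix n n R} (hM : IsUnit M) (a x : n → R) :
    Ring.inverse M *ᵥ a - x = Ring.inverse M *ᵥ (a - M *ᵥ x) := by
  rw [mulVec_sub, mulVec_mulVec, Ring.inverse_mul_cancel M hM, one_mulVec]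

theorem _root_.HasSum.matrix_mulVec_apply {ι m n R : Type*} [Fintype n]
    [NonUnitalNonAssocSemiring R] [TopologicalSpace R] [IsTopologicalSemiring R]
    {f : ι → Matrix m n R} {M : Matrix m n R} (h : HasSum f M) (v : n → R) (j : m) :
    HasSum (fun k => (f k *ᵥ v) j) ((M *ᵥ v) j) :=
  hasSum_sum fun s _ => (Pi.hasSum.1 (Pi.hasSum.1 h j) s).mul_right (v s)

noncomputable def transMat (P : S → (∀ i, A i) → S → ℝ) (π : ∀ i, S → A i → ℝ) :
    Matrix S S ℝ :=
  Matrix.of fun s s' => ∑ a, jointProb π s a * P s a s'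

noncomputable def rewardVec (f : S → (∀ i, A i) → ℝ) (π : ∀ i, S → A i → ℝ) : S → ℝ :=
  fun s => ∑ a, jointProb π s a * f s a

noncomputable def bellmanOp (f : S → (∀ i, A i) → ℝ) (P : S → (∀ i, A i) → S → ℝ) (δ : ℝ)
    (π : ∀ i, S → A i → ℝ) (v : S → ℝ) : S → ℝ :=
  fun s => ∑ a, jointProb π s a * (f s a + δ * ∑ s', P s a s' * v s')

noncomputable def resolvent (P : S → (∀ i, A i) → S → ℝ) (δ : ℝ) (π : ∀ i, S → A i → ℝ) :
    Matrix S S ℝ :=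
  Ring.inverse (1 - δ • transMat P π)

theorem bellmanOp_eq (f : S → (∀ i, A i) → ℝ) (P : S → (∀ i, A i) → S → ℝ) (δ : ℝ)
    (π : ∀ i, S → A i → ℝ) (v : S → ℝ) :
    bellmanOp f P δ π v = rewardVec f π + δ • (transMat P π *ᵥ v) := by
  ext s
  simp only [bellmanOp, rewardVec, transMat, Pi.add_apply, Pi.smul_apply, smul_eq_mul,
    mulVec, dotProduct, of_apply, mul_add, Finset.sum_add_distrib, Finset.mul_sum,
    Finset.sum_mul]
  rw [Finset.sum_comm (s := Finset.univ (α := S))]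
  congr 1
  exact Finset.sum_congr rfl fun _ _ => Finset.sum_congr rfl fun _ _ => by ring

theorem Q_eq_bellmanOp (u : I → S → (∀ i, A i) → ℝ) (P : S → (∀ i, A i) → S → ℝ) (δ : ℝ)
    (π : ∀ i, S → A i → ℝ) (i : I) (s : S) (ai : A i) :
    Q u P δ π i s ai = bellmanOp (u i) P δ (devPolicy π i ai) (V u P δ π i) s :=
  rfl

theorem iterate_stepDist_dirac (P : S → (∀ i, A i) → S → ℝ) (π : ∀ i, S → A i → ℝ) (s : S)
    (k : ℕ) : (stepDist P π)^[k] (dirac s) = (transMat P π ^ k).row s := by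
  induction k with
  | zero =>
    ext s'
    simp [dirac, one_apply, eq_comm]
  | succ k ih =>
    rw [Function.iterate_succ_apply', ih, pow_succ, ← single_one_vecMul, ← single_one_vecMul,
      ← vecMul_vecMul]
    rfl

theorem expReward_eq_dotProduct (f : S → (∀ i, A i) → ℝ) (π : ∀ i, S → A i → ℝ) (ν : S → ℝ) :
    expReward f π ν = ν ⬝ᵥ rewardVec f π :=
  rfl

theorem jointProb_nonneg {π : ∀ i, S → A i → ℝ} (hπ : IsPolicy π) (s : S) (a : ∀ i, A i) :
    0 ≤ jointProb π s a :=
  Finset.prod_nonneg fun j _ => (hπ j s).1 (a j)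

theorem sum_jointProb {π : ∀ i, S → A i → ℝ} (hπ : IsPolicy π) (s : S) :
    ∑ a, jointProb π s a = 1 := by
  simp only [jointProb, ← Fintype.prod_sum, (hπ _ s).2, Finset.prod_const_one]

theorem transMat_mem_rowStochastic {P : S → (∀ i, A i) → S → ℝ} {π : ∀ i, S → A i → ℝ}
    (hP : IsKernel P) (hπ : IsPolicy π) : transMat P π ∈ rowStochastic ℝ S := by
  refine mem_rowStochastic_iff_sum.2 ⟨fun s s' => ?_, fun s => ?_⟩
  · exact Finset.sum_nonneg fun a _ => mul_nonneg (jointProb_nonneg hπ s a) ((hP s a).1 s')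
  · simp only [transMat, of_apply]
    rw [Finset.sum_comm]
    simp only [← Finset.mul_sum, (hP s _).2, mul_one, sum_jointProb hπ s]

theorem updateEntry_self (π : ∀ i, S → A i → ℝ) (i : I) (s : S) (ai : A i) :
    updateEntry π i s ai (π i s ai) = π := by
  rw [updateEntry]
  convert Function.update_eq_self i π using 2
  ext s' b
  split_ifs with h
  · rw [h.1, h.2]
  · rfl

theorem jointProb_update (π : ∀ i, S → A i → ℝ) (i : I) (πi : S → A i → ℝ) (s : S)
    (a : ∀ i, A i) :
    jointProb (Function.update π i πi) s a = πi s (a i) * ∏ j ∈ univ.erase i, π j s (a j) := by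
  rw [jointProb, ← Finset.mul_prod_erase _ _ (Finset.mem_univ i), Function.update_self]
  congr 1
  exact Finset.prod_congr rfl fun j hj => by rw [Function.update_of_ne (Finset.ne_of_mem_erase hj)]

theorem jointProb_updateEntry (π : ∀ i, S → A i → ℝ) (i : I) (s : S) (ai : A i) (t : ℝ)
    (s0 : S) (a : ∀ i, A i) :
    jointProb (updateEntry π i s ai t) s0 a = jointProb π s0 a +
      if s0 = s then (t - π i s ai) * jointProb (devPolicy π i ai) s0 a else 0 := by
  have hπ := jointProb_update π i (π i) s0 a
  rw [Function.update_eq_self] at hπ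
  rw [updateEntry, devPolicy, jointProb_update, jointProb_update, hπ]
  by_cases hs : s0 = s
  · by_cases ha : a i = ai
    · simp only [hs, ha, and_self, ↓reduceIte, pureAt]
      ring
    · simp only [hs, ha, and_false, ↓reduceIte, pureAt, zero_mul, mul_zero, add_zero]
  · simp only [hs, false_and, ↓reduceIte, add_zero]

theorem sum_jointProb_updateEntry_mul (π : ∀ i, S → A i → ℝ) (i : I) (s : S) (ai : A i)
    (t : ℝ) (s0 : S) (F : (∀ i, A i) → ℝ) :
    ∑ a, jointProb (updateEntry π i s ai t) s0 a * F a = ∑ a, jointProb π s0 a * F a +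
      if s0 = s then (t - π i s ai) * ∑ a, jointProb (devPolicy π i ai) s0 a * F a else 0 := by
  simp_rw [jointProb_updateEntry, add_mul, Finset.sum_add_distrib]
  split_ifs <;> simp [Finset.mul_sum, mul_assoc]

theorem bellmanOp_updateEntry_sub (f : S → (∀ i, A i) → ℝ) (P : S → (∀ i, A i) → S → ℝ)
    (δ : ℝ) (π : ∀ i, S → A i → ℝ) (i : I) (s : S) (ai : A i) (t : ℝ) (v : S → ℝ) :
    bellmanOp f P δ (updateEntry π i s ai t) v - bellmanOp f P δ π v =
      Pi.single s ((t - π i s ai) * bellmanOp f P δ (devPolicy π i ai) v s) := by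
  ext s0
  simp only [Pi.sub_apply, bellmanOp, sum_jointProb_updateEntry_mul, Pi.single_apply]
  split_ifs with h
  · subst h; ring
  · ring

theorem continuous_transMat_updateEntry (P : S → (∀ i, A i) → S → ℝ) (π : ∀ i, S → A i → ℝ)
    (i : I) (s : S) (ai : A i) : Continuous fun t => transMat P (updateEntry π i s ai t) := by
  refine continuous_pi fun s0 => continuous_pi fun s' => ?_
  simp only [transMat, of_apply, sum_jointProb_updateEntry_mul]
  split_ifs <;> fun_prop

section LinftyOpNorm

attribute [local instance] Matrix.linftyOpNormedRing Matrix.linftyOpNormedAlgebra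

theorem _root_.Matrix.linfty_opNorm_le_one_of_mem_rowStochastic {n : Type*} [Fintype n]
    [DecidableEq n] {M : Matrix n n ℝ} (hM : M ∈ rowStochastic ℝ n) : ‖M‖ ≤ 1 := by
  rw [linfty_opNorm_def, NNReal.coe_le_one]
  refine Finset.sup_le fun s _ => ?_
  rw [← NNReal.coe_le_coe, NNReal.coe_sum]
  simp only [coe_nnnorm, Real.norm_of_nonneg (nonneg_of_mem_rowStochastic hM),
    sum_row_of_mem_rowStochastic hM, NNReal.coe_one, le_refl]

theorem norm_smul_transMat_lt_one {P : S → (∀ i, A i) → S → ℝ} {π : ∀ i, S → A i → ℝ}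
    {δ : ℝ} (hP : IsKernel P) (hπ : IsPolicy π) (hδ0 : 0 ≤ δ) (hδ1 : δ < 1) :
    ‖δ • transMat P π‖ < 1 :=
  calc ‖δ • transMat P π‖ ≤ ‖δ‖ * ‖transMat P π‖ := norm_smul_le _ _
    _ ≤ δ * 1 := by
      rw [Real.norm_of_nonneg hδ0]
      gcongr
      exact linfty_opNorm_le_one_of_mem_rowStochastic (transMat_mem_rowStochastic hP hπ)
    _ < 1 := by linarith

theorem V_eq_resolvent_mulVec (u : I → S → (∀ i, A i) → ℝ) (P : S → (∀ i, A i) → S → ℝ)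
    {δ : ℝ} {π : ∀ i, S → A i → ℝ} (i : I) (h : ‖δ • transMat P π‖ < 1) :
    V u P δ π i = resolvent P δ π *ᵥ rewardVec (u i) π := by
  ext s
  refine (tsum_congr fun k => ?_).trans
    ((hasSum_geom_series_inverse _ h).matrix_mulVec_apply _ s).tsum_eq
  rw [iterate_stepDist_dirac, expReward_eq_dotProduct, smul_pow, smul_mulVec]
  rfl

theorem bellmanOp_V (u : I → S → (∀ i, A i) → ℝ) (P : S → (∀ i, A i) → S → ℝ)
    {δ : ℝ} {π : ∀ i, S → A i → ℝ} (i : I) (h : ‖δ • transMat P π‖ < 1) :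
    bellmanOp (u i) P δ π (V u P δ π i) = V u P δ π i := by
  have hfix : (1 - δ • transMat P π) *ᵥ V u P δ π i = rewardVec (u i) π := by
    rw [V_eq_resolvent_mulVec u P i h, resolvent, mulVec_mulVec,
      Ring.mul_inverse_cancel _ (isUnit_one_sub_of_norm_lt_one h), one_mulVec]
  rw [bellmanOp_eq, ← hfix, sub_mulVec, one_mulVec, smul_mulVec]
  abel

theorem dvisit_eq {P : S → (∀ i, A i) → S → ℝ} {π : ∀ i, S → A i → ℝ} {δ : ℝ}
    (hP : IsKernel P) (hπ : IsPolicy π) (hδ0 : 0 ≤ δ) (hδ1 : δ < 1) (μ : S → ℝ) (s : S) :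
    dvisit P δ π μ s = (1 - δ) * ∑ s0, μ s0 * resolvent P δ π s0 s := by
  have hR := hasSum_geom_series_inverse _ (norm_smul_transMat_lt_one hP hπ hδ0 hδ1)
  rw [dvisit]
  congr 1
  refine Finset.sum_congr rfl fun s0 _ => congrArg (μ s0 * ·) ?_
  refine (tsum_congr fun k => ?_).trans (Pi.hasSum.1 (Pi.hasSum.1 hR s0) s).tsum_eq
  rw [iterate_stepDist_dirac, smul_pow]
  rfl

theorem V_updateEntry_sub (u : I → S → (∀ i, A i) → ℝ) (P : S → (∀ i, A i) → S → ℝ)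
    {δ : ℝ} {π : ∀ i, S → A i → ℝ} (i : I) (s : S) (ai : A i) {t : ℝ}
    (h : ‖δ • transMat P π‖ < 1) (ht : ‖δ • transMat P (updateEntry π i s ai t)‖ < 1)
    (s0 : S) :
    V u P δ (updateEntry π i s ai t) i s0 - V u P δ π i s0 =
      (t - π i s ai) * (Q u P δ π i s ai * resolvent P δ (updateEntry π i s ai t) s0 s) := by
  set πt := updateEntry π i s ai t
  have hgap : rewardVec (u i) πt - (1 - δ • transMat P πt) *ᵥ V u P δ π i =
      Pi.single s ((t - π i s ai) * Q u P δ π i s ai) := by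
    rw [Q_eq_bellmanOp, ← bellmanOp_updateEntry_sub, bellmanOp_V u P i h, bellmanOp_eq,
      sub_mulVec, one_mulVec, smul_mulVec]
    abel
  have hdiff : V u P δ πt i - V u P δ π i =
      resolvent P δ πt *ᵥ (rewardVec (u i) πt - (1 - δ • transMat P πt) *ᵥ V u P δ π i) := by
    rw [V_eq_resolvent_mulVec u P i ht]
    exact inverse_mulVec_sub (isUnit_one_sub_of_norm_lt_one ht) _ _
  rw [← Pi.sub_apply, hdiff, hgap, mulVec_single]
  simp only [Pi.smul_apply, col_apply, MulOpposite.smul_eq_mul_unop, MulOpposite.unop_op]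
  ring

theorem continuousAt_resolvent_updateEntry {P : S → (∀ i, A i) → S → ℝ}
    {π : ∀ i, S → A i → ℝ} {δ : ℝ} (i : I) (s : S) (ai : A i) (h : ‖δ • transMat P π‖ < 1) :
    ContinuousAt (fun t => resolvent P δ (updateEntry π i s ai t)) (π i s ai) := by
  have hW : Continuous fun t => δ • transMat P (updateEntry π i s ai t) :=
    (continuous_transMat_updateEntry P π i s ai).const_smul δ
  refine ContinuousAt.comp (g := Ring.inverse) ?_ (continuous_const.sub hW).continuousAt
  rw [updateEntry_self]
  exact NormedRing.inverse_continuousAt (Units.oneSub _ h)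

theorem eventually_norm_smul_transMat_updateEntry_lt_one {P : S → (∀ i, A i) → S → ℝ}
    {π : ∀ i, S → A i → ℝ} {δ : ℝ} (i : I) (s : S) (ai : A i) (h : ‖δ • transMat P π‖ < 1) :
    ∀ᶠ t in nhds (π i s ai), ‖δ • transMat P (updateEntry π i s ai t)‖ < 1 := by
  have hW : Continuous fun t => ‖δ • transMat P (updateEntry π i s ai t)‖ :=
    ((continuous_transMat_updateEntry P π i s ai).const_smul δ).norm
  exact hW.continuousAt.eventually_lt continuousAt_const (by rwa [updateEntry_self])

theorem hasDerivAt_Vmu_updateEntry (u : I → S → (∀ i, A i) → ℝ)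
    {P : S → (∀ i, A i) → S → ℝ} {π : ∀ i, S → A i → ℝ} {δ : ℝ} (hP : IsKernel P)
    (hπ : IsPolicy π) (hδ0 : 0 ≤ δ) (hδ1 : δ < 1) (μ : S → ℝ) (i : I) (s : S) (ai : A i) :
    HasDerivAt (fun t => Vmu u P δ (updateEntry π i s ai t) i μ)
      (Q u P δ π i s ai * ∑ s0, μ s0 * resolvent P δ π s0 s) (π i s ai) := by
  have h := norm_smul_transMat_lt_one hP hπ hδ0 hδ1
  set g := fun t => Q u P δ π i s ai * ∑ s0, μ s0 * resolvent P δ (updateEntry π i s ai t) s0 s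
  have hR := continuousAt_resolvent_updateEntry i s ai h
  have hg : ContinuousAt g (π i s ai) :=
    continuousAt_const.mul (tendsto_finsetSum _ fun s0 _ =>
      continuousAt_const.mul ((continuous_apply_apply s0 s).continuousAt.comp hR))
  have hslope : ∀ᶠ t in nhds (π i s ai),
      Vmu u P δ (updateEntry π i s ai t) i μ - Vmu u P δ (updateEntry π i s ai (π i s ai)) i μ =
        (t - π i s ai) * g t := by
    filter_upwards [eventually_norm_smul_transMat_updateEntry_lt_one i s ai h] with t ht
    simp only [g, Vmu, updateEntry_self, ← Finset.sum_sub_distrib, ← mul_sub,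
      V_updateEntry_sub u P i s ai h ht, Finset.mul_sum]
    exact Finset.sum_congr rfl fun _ _ => by ring
  simpa only [g, updateEntry_self] using hasDerivAt_of_eventually_sub_eq_mul hslope hg

end LinftyOpNorm

theorem potential_gradient_general (u : I → S → (∀ i, A i) → ℝ)
    (P : S → (∀ i, A i) → S → ℝ) (δ : ℝ)
    (Φ : S → (∀ i, S → A i → ℝ) → ℝ)
    (hδ0 : 0 < δ) (hδ1 : δ < 1) (hP : IsKernel P)
    (hpot : ∀ (s : S) (i : I) (πi' : S → A i → ℝ) (π : ∀ j, S → A j → ℝ),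
      Φ s (Function.update π i πi') - Φ s π =
        V u P δ (Function.update π i πi') i s - V u P δ π i s)
    (π : ∀ i, S → A i → ℝ) (hπ : IsPolicy π) (μ : S → ℝ)
    (i : I) (s : S) (ai : A i) :
    HasDerivAt (fun t => ∑ s', μ s' * Φ s' (updateEntry π i s ai t))
        (1 / (1 - δ) * dvisit P δ π μ s * Q u P δ π i s ai) (π i s ai) ∧
      HasDerivAt (fun t => Vmu u P δ (updateEntry π i s ai t) i μ)
        (1 / (1 - δ) * dvisit P δ π μ s * Q u P δ π i s ai) (π i s ai) := by
  have hV := hasDerivAt_Vmu_updateEntry u hP hπ hδ0.le hδ1 μ i s ai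
  have hval : 1 / (1 - δ) * dvisit P δ π μ s * Q u P δ π i s ai =
      Q u P δ π i s ai * ∑ s0, μ s0 * resolvent P δ π s0 s := by
    rw [dvisit_eq hP hπ hδ0.le hδ1]
    field_simp [sub_ne_zero.2 hδ1.ne']
  have hΦ : (fun t => ∑ s', μ s' * Φ s' (updateEntry π i s ai t)) = fun t =>
      Vmu u P δ (updateEntry π i s ai t) i μ + ∑ s', μ s' * (Φ s' π - V u P δ π i s') := by
    funext t
    rw [Vmu, ← Finset.sum_add_distrib]
    refine Finset.sum_congr rfl fun s' _ => ?_
    have hdev : Φ s' (updateEntry π i s ai t) - Φ s' π =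
        V u P δ (updateEntry π i s ai t) i s' - V u P δ π i s' := hpot s' i _ π
    linear_combination μ s' * hdev
  rw [hval, hΦ]
  exact ⟨hV.add_const _, hV⟩

/-- potential-gradient identity: in a Markov potential game with
potential `Φ` (differentiable in policy entries, i.e. the potential property is
required along unilateral deviations of each player's policy), the partial
derivatives of `Φ(μ,·)` and of `V_i(μ,·)` in the entry `π_i(s,a_i)` agree and
equal `(1/(1-δ)) d_μ^π(s) Q_i(s,a_i;π)`. -/
theorem potential_gradient (u : I → S → (∀ i, A i) → ℝ)
    (P : S → (∀ i, A i) → S → ℝ) (δ : ℝ)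
    (Φ : S → (∀ i, S → A i → ℝ) → ℝ)
    (hδ0 : 0 < δ) (hδ1 : δ < 1) (hP : IsKernel P)
    (hpot : ∀ (s : S) (i : I) (πi' : S → A i → ℝ) (π : ∀ j, S → A j → ℝ),
      Φ s (Function.update π i πi') - Φ s π =
        V u P δ (Function.update π i πi') i s - V u P δ π i s)
    (π : ∀ i, S → A i → ℝ) (hπ : IsPolicy π) (μ : S → ℝ) (hμ : simplex μ)
    (i : I) (s : S) (ai : A i) :
    HasDerivAt (fun t => ∑ s', μ s' * Φ s' (updateEntry π i s ai t))
        (1 / (1 - δ) * dvisit P δ π μ s * Q u P δ π i s ai) (π i s ai) ∧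
      HasDerivAt (fun t => Vmu u P δ (updateEntry π i s ai t) i μ)
        (1 / (1 - δ) * dvisit P δ π μ s * Q u P δ π i s ai) (π i s ai) :=
  potential_gradient_general u P δ Φ hδ0 hδ1 hP hpot π hπ μ i s ai

end MPG
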